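/- arXiv:2502.20149 — 2 statements merged into one kernel-verified Lean document; each statement's English description precedes it below -/
import Mathlib

section
/- Let x : ZMod 8 → EuclideanSpace ℝ (Fin 3) be a realization of the cyclooctane linkage with edge length ℓ > 0 and bond angle φ = 3π/4. Then the points x i, i ∈ ZMod 8, are coplanar, i.e. Coplanar ℝ (Set.range x). -/
/-!
Write `e i = x (i + 1) - x i` for the edges. They close up, `∑ e i = 0`, have length `ℓ`, and
consecutive edges make the exterior angle `π / 4`, so in terms of the autocorrelations
`A k = ∑ i, ⟪e i, e (i + k)⟫` we have `√2 * A 1 = A 0`. For a closed octagon this is the equality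
case of a discrete Wirtinger inequality: only the Fourier modes `±1` of `e` survive, which
concretely means `e (i + 2) = √2 • e (i + 1) - e i` for all `i`. So every edge, and hence every
`x i - x 0`, lies in the span of `e 0` and `e 1`.
-/

open Real EuclideanGeometry

/-- A realization of the cyclooctane linkage with edge length `ℓ` and bond angle `φ`. -/
def IsCyclooctaneRealization (ℓ φ : ℝ) (x : ZMod 8 → EuclideanSpace ℝ (Fin 3)) : Prop :=
  (∀ i : ZMod 8, dist (x i) (x (i + 1)) = ℓ) ∧
  (∀ i : ZMod 8, ∠ (x (i - 1)) (x i) (x (i + 1)) = φ)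

open RealInnerProductSpace

theorem ZMod.forall_of_succ {n : ℕ} [NeZero n] {p : ZMod n → Prop} (zero : p 0)
    (succ : ∀ i, p i → p (i + 1)) (i : ZMod n) : p i := by
  rw [← ZMod.natCast_zmod_val i]
  induction i.val with
  | zero => simpa using zero
  | succ k ih => simpa using succ _ ih

theorem ZMod.sum_univ_eight {M : Type*} [AddCommMonoid M] (f : ZMod 8 → M) :
    ∑ i, f i = f 0 + f 1 + f 2 + f 3 + f 4 + f 5 + f 6 + f 7 :=
  Fin.sum_univ_eight f

theorem sum_sub_add_one_eq_zero {M : Type*} [AddCommGroup M] {n : ℕ} [NeZero n]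
    (x : ZMod n → M) : ∑ i, (x (i + 1) - x i) = 0 := by
  rw [Finset.sum_sub_distrib, sub_eq_zero]
  exact Equiv.sum_comp (Equiv.addRight 1) x

theorem mem_span_pair_of_add_two_eq {R M : Type*} [Ring R] [AddCommGroup M] [Module R M]
    {n : ℕ} [NeZero n] {v : ZMod n → M} {a b : R} (h : ∀ i, v (i + 2) = a • v (i + 1) + b • v i)
    (i : ZMod n) : v i ∈ Submodule.span R {v 0, v 1} := by
  set S := Submodule.span R {v 0, v 1}
  suffices ∀ i, v i ∈ S ∧ v (i + 1) ∈ S from (this i).1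
  refine ZMod.forall_of_succ ⟨?_, ?_⟩ fun i ⟨hi, hi₁⟩ => ⟨hi₁, ?_⟩
  · exact Submodule.subset_span (by simp)
  · exact Submodule.subset_span (by simp)
  · rw [add_assoc, one_add_one_eq_two, h]
    exact S.add_mem (S.smul_mem a hi₁) (S.smul_mem b hi)

theorem vectorSpan_range_le_of_forall_vsub_mem {k V P : Type*} [Ring k] [AddCommGroup V]
    [Module k V] [AddTorsor V P] {n : ℕ} [NeZero n] {x : ZMod n → P} {S : Submodule k V}
    (h : ∀ i, x (i + 1) -ᵥ x i ∈ S) : vectorSpan k (Set.range x) ≤ S := by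
  rw [vectorSpan_range_eq_span_range_vsub_right k x 0, Submodule.span_le]
  rintro _ ⟨i, rfl⟩
  refine ZMod.forall_of_succ (p := fun i => x i -ᵥ x 0 ∈ S) (by simp) (fun i hi => ?_) i
  rw [← vsub_add_vsub_cancel _ (x i)]
  exact S.add_mem (h i) hi

theorem coplanar_of_vectorSpan_le_span_pair {k V P : Type*} [DivisionRing k] [AddCommGroup V]
    [Module k V] [AddTorsor V P] {s : Set P} {a b : V}
    (h : vectorSpan k s ≤ Submodule.span k {a, b}) : Coplanar k s := by
  refine (Submodule.rank_mono h).trans ((rank_span_le _).trans ?_)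
  refine Cardinal.mk_insert_le.trans ?_
  rw [Cardinal.mk_singleton]
  norm_num

theorem inner_vsub_vsub_eq_neg_dist_mul_dist_mul_cos_angle {V P : Type*}
    [NormedAddCommGroup V] [InnerProductSpace ℝ V] [MetricSpace P] [NormedAddTorsor V P]
    (a b c : P) : ⟪b -ᵥ a, c -ᵥ b⟫ = -(dist a b * dist b c * cos (∠ a b c)) := by
  rw [← neg_vsub_eq_vsub_rev a b, inner_neg_left, EuclideanGeometry.angle,
    ← InnerProductGeometry.cos_angle_mul_norm_mul_norm, dist_eq_norm_vsub V a b,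
    dist_eq_norm_vsub' V b c]
  ring

section Autocorrelation

variable {E : Type*} [NormedAddCommGroup E] [InnerProductSpace ℝ E] {n : ℕ} [NeZero n]

def autocorrelation (v : ZMod n → E) (k : ZMod n) : ℝ := ∑ i, ⟪v i, v (i + k)⟫

theorem sum_inner_add_add_eq_autocorrelation (v : ZMod n → E) (a b : ZMod n) :
    ∑ i, ⟪v (i + a), v (i + b)⟫ = autocorrelation v (b - a) := by
  simpa only [autocorrelation, Equiv.coe_addRight, add_assoc, add_sub_cancel] using
    Equiv.sum_comp (Equiv.addRight a) fun i => ⟪v i, v (i + (b - a))⟫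

theorem autocorrelation_neg (v : ZMod n → E) (k : ZMod n) :
    autocorrelation v (-k) = autocorrelation v k := by
  rw [← zero_sub, ← sum_inner_add_add_eq_autocorrelation, autocorrelation]
  simp only [add_zero, real_inner_comm]

theorem inner_sum_self_eq_sum_autocorrelation (v : ZMod n → E) :
    ⟪∑ i, v i, ∑ i, v i⟫ = ∑ k, autocorrelation v k := by
  rw [sum_inner]
  simp only [inner_sum, autocorrelation]
  conv_rhs => rw [Finset.sum_comm]
  exact Finset.sum_congr rfl fun i _ => (Equiv.sum_comp (Equiv.addLeft i) _).symm

theorem sum_inner_self_sum_smul_eq_sum_autocorrelation {ι : Type*} [Fintype ι] (c : ι → ℝ)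
    (d : ι → ZMod n) (v : ZMod n → E) :
    ∑ i, ⟪∑ j, c j • v (i + d j), ∑ j, c j • v (i + d j)⟫ =
      ∑ j, ∑ l, c j * c l * autocorrelation v (d j - d l) := by
  simp only [sum_inner, inner_sum, real_inner_smul_left, real_inner_smul_right]
  rw [Finset.sum_comm]
  refine Finset.sum_congr rfl fun j _ => ?_
  rw [Finset.sum_comm]
  refine Finset.sum_congr rfl fun l _ => ?_
  rw [← sum_inner_add_add_eq_autocorrelation, Finset.mul_sum]
  simp only [mul_assoc]

end Autocorrelation

section Octagon

variable {E : Type*} [NormedAddCommGroup E] [InnerProductSpace ℝ E]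

theorem add_two_eq_sqrt_two_smul_sub_of_sum_eq_zero (v : ZMod 8 → E) (hsum : ∑ i, v i = 0)
    (h1 : √2 * autocorrelation v 1 = autocorrelation v 0) (i : ZMod 8) :
    v (i + 2) = √2 • v (i + 1) - v i := by
  have h5 : autocorrelation v 5 = autocorrelation v 3 := by rw [← autocorrelation_neg]; rfl
  have h6 : autocorrelation v 6 = autocorrelation v 2 := by rw [← autocorrelation_neg]; rfl
  have h7 : autocorrelation v 7 = autocorrelation v 1 := by rw [← autocorrelation_neg]; rfl
  have hS : ∑ k, autocorrelation v k = 0 := by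
    rw [← inner_sum_self_eq_sum_autocorrelation, hsum, inner_zero_left]
  rw [ZMod.sum_univ_eight, h5, h6, h7] at hS
  have hW := sum_inner_self_sum_smul_eq_sum_autocorrelation ![1, -√2, 1] ![0, 1, 2] v
  have hZ := sum_inner_self_sum_smul_eq_sum_autocorrelation ![1, 1 - √2, 1 - √2, 1] ![0, 1, 2, 3] v
  have hY := sum_inner_self_sum_smul_eq_sum_autocorrelation ![1, 1] ![0, 4] v
  simp only [Fin.sum_univ_succ, Fin.sum_univ_zero, Matrix.cons_val_zero, Matrix.cons_val_succ,
    add_zero, one_smul, neg_smul, inner_self_eq_norm_sq_to_K, ringHom_apply] at hW hZ hY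
  reduce_mod_char at hW hZ hY
  rw [h6, h7] at hW
  rw [h5, h6, h7] at hZ
  set W := ∑ x, ‖v x + (-(√2 • v (x + 1)) + v (x + 2))‖ ^ 2
  set Z := ∑ x, ‖v x + ((1 + -√2) • v (x + 1) + ((1 + -√2) • v (x + 2) + v (x + 3)))‖ ^ 2
  set Y := ∑ x, ‖v x + v (x + 4)‖ ^ 2
  -- `W` vanishes exactly on the Fourier modes `±1`; `Z` and `Y` absorb the lags `3` and `4`.
  have hsos : (2 * √2 - 1) * W + Z + Y / 2 = 0 := by
    linear_combination (2 * √2 - 1) * hW + hZ + hY / 2 + hS - (2 * √2 ^ 3 + √2 ^ 2 + 2) * h1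
      + (2 * √2 ^ 2 + √2 - 2) * autocorrelation v 1 * mul_self_sqrt (zero_le_two (α := ℝ))
  have hW0 : W = 0 := by
    have hpos : 0 < 2 * √2 - 1 := by nlinarith [sqrt_nonneg 2, sq_sqrt (zero_le_two (α := ℝ))]
    have hZ0 : 0 ≤ Z := by positivity
    have hY0 : 0 ≤ Y := by positivity
    exact le_antisymm (nonpos_of_mul_nonpos_right (by linarith) hpos) (by positivity)
  have hi := congrFun ((Fintype.sum_eq_zero_iff_of_nonneg fun _ => by positivity).1 hW0) i
  simp only [Pi.zero_apply, sq_eq_zero_iff, norm_eq_zero] at hi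
  linear_combination (norm := module) hi

end Octagon

namespace IsCyclooctaneRealization

variable {ℓ φ : ℝ} {x : ZMod 8 → EuclideanSpace ℝ (Fin 3)}

theorem autocorrelation_edges_zero (hx : IsCyclooctaneRealization ℓ φ x) :
    autocorrelation (fun i => x (i + 1) - x i) 0 = 8 * ℓ ^ 2 := by
  have h i : ⟪x (i + 1) - x i, x (i + 1) - x i⟫ = ℓ ^ 2 := by
    rw [real_inner_self_eq_norm_sq, ← dist_eq_norm', hx.1]
  simp only [autocorrelation, add_zero, h, Finset.sum_const, Finset.card_univ, ZMod.card,
    nsmul_eq_mul]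
  norm_num

theorem autocorrelation_edges_one (hx : IsCyclooctaneRealization ℓ φ x) :
    autocorrelation (fun i => x (i + 1) - x i) 1 = -(8 * ℓ ^ 2 * cos φ) := by
  have h i : ⟪x (i + 1) - x i, x (i + 1 + 1) - x (i + 1)⟫ = -(ℓ ^ 2 * cos φ) := by
    have := inner_vsub_vsub_eq_neg_dist_mul_dist_mul_cos_angle (x i) (x (i + 1)) (x (i + 1 + 1))
    have hangle : ∠ (x i) (x (i + 1)) (x (i + 1 + 1)) = φ := by simpa using hx.2 (i + 1)
    rwa [hx.1, hx.1, hangle, ← sq] at this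
  simp only [autocorrelation, h, Finset.sum_neg_distrib, Finset.sum_const, Finset.card_univ,
    ZMod.card, nsmul_eq_mul, Nat.cast_ofNat, neg_inj]
  ring

end IsCyclooctaneRealization

theorem cyclooctaneRealization_coplanar_at_maximal_angle_general
    (ℓ : ℝ)
    (x : ZMod 8 → EuclideanSpace ℝ (Fin 3))
    (hx : IsCyclooctaneRealization ℓ (3 * π / 4) x) :
    Coplanar ℝ (Set.range x) := by
  set e : ZMod 8 → EuclideanSpace ℝ (Fin 3) := fun i => x (i + 1) - x i
  have hcos : cos (3 * π / 4) = -(√2 / 2) := by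
    rw [show 3 * π / 4 = π - π / 4 by ring, cos_pi_sub, cos_pi_div_four]
  have h1 : √2 * autocorrelation e 1 = autocorrelation e 0 := by
    rw [hx.autocorrelation_edges_one, hx.autocorrelation_edges_zero, hcos]
    linear_combination 4 * ℓ ^ 2 * mul_self_sqrt (zero_le_two (α := ℝ))
  have hrec i : e (i + 2) = √2 • e (i + 1) + (-1 : ℝ) • e i := by
    rw [add_two_eq_sqrt_two_smul_sub_of_sum_eq_zero e (sum_sub_add_one_eq_zero x) h1,
      neg_one_smul, sub_eq_add_neg]
  exact coplanar_of_vectorSpan_le_span_pair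
    (vectorSpan_range_le_of_forall_vsub_mem fun i => mem_span_pair_of_add_two_eq hrec i)

theorem cyclooctaneRealization_coplanar_at_maximal_angle
    (ℓ : ℝ) (hℓ : 0 < ℓ)
    (x : ZMod 8 → EuclideanSpace ℝ (Fin 3))
    (hx : IsCyclooctaneRealization ℓ (3 * π / 4) x) :
    Coplanar ℝ (Set.range x) :=
  cyclooctaneRealization_coplanar_at_maximal_angle_general ℓ x hx
end

section
/- Let S be the 3×3 real matrix with rows (0, 1, 0), (1, 0, 0), (0, 0, -1). If x : ZMod 8 → (Fin 3 → ℝ) satisfies the Eckart condition, then the map y defined by y i = S.mulVec (x (3 - i)) also satisfies the Eckart condition. (This is a reversal generator of the D₈-action on standard realizations.) -/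
open Real Matrix

/-- The planar regular octagon reference configuration:
`xpln i = (cos ((2i-1)π/8), sin ((2i-1)π/8), 0)`, using the integer lift `i.val`;
this is well defined on `ZMod 8` since the expression is unchanged under `i ↦ i + 8`. -/
noncomputable def xpln (i : ZMod 8) : Fin 3 → ℝ :=
  ![Real.cos ((2 * (i.val : ℝ) - 1) * π / 8), Real.sin ((2 * (i.val : ℝ) - 1) * π / 8), 0]

/-- The Eckart condition with respect to the reference octagon `xpln`. -/
def EckartCondition (x : ZMod 8 → Fin 3 → ℝ) : Prop :=
  (∑ i : ZMod 8, x i = 0) ∧ (∑ i : ZMod 8, (xpln i) ⨯₃ (x i) = 0)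

/-- The rotation by `π` about the axis `(1,1,0)ᵀ`. -/
def S : Matrix (Fin 3) (Fin 3) ℝ :=
  !![0, 1, 0;
     1, 0, 0;
     0, 0, -1]

/-! The reversal `i ↦ 3 - i` is realised on the reference octagon by the rotation `S`, which sends
the vertex at angle `θ` to the one at angle `π/2 - θ`. A rotation commutes with the cross product,
so after reindexing both Eckart sums of the reversed configuration are `S` applied to those of `x`. -/

theorem Matrix.mulVec_cross_mulVec {R : Type*} [CommRing R] (A : Matrix (Fin 3) (Fin 3) R)
    (a b : Fin 3 → R) : (A *ᵥ a) ⨯₃ (A *ᵥ b) = A.adjugateᵀ *ᵥ (a ⨯₃ b) := by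
  ext i
  fin_cases i <;>
    simp [cross_apply, adjugate_fin_three, mulVec, dotProduct, Fin.sum_univ_three] <;> ring

theorem Matrix.adjugate_eq_transpose_of_mem_specialOrthogonalGroup {n R : Type*} [Fintype n]
    [DecidableEq n] [CommRing R] {A : Matrix n n R} (hA : A ∈ specialOrthogonalGroup n R) :
    A.adjugate = Aᵀ := by
  obtain ⟨hOrth, hdet⟩ := mem_specialOrthogonalGroup_iff.mp hA
  calc A.adjugate = A.adjugate * (A * Aᵀ) := by
        rw [(mem_orthogonalGroup_iff n R).mp hOrth, mul_one]
    _ = Aᵀ := by rw [← Matrix.mul_assoc, adjugate_mul, hdet, one_smul, Matrix.one_mul]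

theorem Matrix.mulVec_cross_of_mem_specialOrthogonalGroup {R : Type*} [CommRing R]
    {A : Matrix (Fin 3) (Fin 3) R} (hA : A ∈ specialOrthogonalGroup (Fin 3) R)
    (a b : Fin 3 → R) : A *ᵥ (a ⨯₃ b) = (A *ᵥ a) ⨯₃ (A *ᵥ b) := by
  rw [mulVec_cross_mulVec, adjugate_eq_transpose_of_mem_specialOrthogonalGroup hA,
    transpose_transpose]

theorem xpln_intCast (n : ℤ) :
    xpln n = ![cos ((2 * n - 1) * π / 8), sin ((2 * n - 1) * π / 8), 0] := by
  have hlift : (((n : ZMod 8).val : ℤ) : ℝ) = n - 8 * (n / 8 : ℤ) := by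
    rw [ZMod.val_intCast, Int.emod_def]; push_cast; ring
  have hangle : (2 * (((n : ZMod 8).val : ℕ) : ℝ) - 1) * π / 8
      = (2 * n - 1) * π / 8 + (-(n / 8) : ℤ) * (2 * π) := by
    rw [← Int.cast_natCast, hlift]; push_cast; ring
  rw [xpln, hangle, cos_add_int_mul_two_pi, sin_add_int_mul_two_pi]

theorem S_mulVec (a b c : ℝ) : S *ᵥ ![a, b, c] = ![b, a, -c] := by
  ext i
  fin_cases i <;> simp [S, mulVec, dotProduct, Fin.sum_univ_three]

theorem S_mem_specialOrthogonalGroup : S ∈ specialOrthogonalGroup (Fin 3) ℝ := by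
  refine mem_specialOrthogonalGroup_iff.mpr ⟨(mem_orthogonalGroup_iff (Fin 3) ℝ).mpr ?_, ?_⟩
  · ext i j
    fin_cases i <;> fin_cases j <;> simp [S, Matrix.mul_apply, Fin.sum_univ_three]
  · simp [S, det_fin_three]

theorem xpln_three_sub (j : ZMod 8) : xpln (3 - j) = S *ᵥ xpln j := by
  have hlift : 3 - j = ((3 - j.val : ℤ) : ZMod 8) := by push_cast; simp
  have hangle :
      (2 * ((3 - j.val : ℤ) : ℝ) - 1) * π / 8 = π / 2 - (2 * (j.val : ℝ) - 1) * π / 8 := by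
    push_cast; ring
  rw [hlift, xpln_intCast, xpln, S_mulVec, neg_zero, hangle, cos_pi_div_two_sub,
    sin_pi_div_two_sub]

theorem EckartCondition.comp_symmetry {x : ZMod 8 → Fin 3 → ℝ} (hx : EckartCondition x)
    {A : Matrix (Fin 3) (Fin 3) ℝ} (hA : A ∈ specialOrthogonalGroup (Fin 3) ℝ)
    (σ : Equiv.Perm (ZMod 8)) (hσ : ∀ i, xpln (σ i) = A *ᵥ xpln i) :
    EckartCondition (fun i => A *ᵥ x (σ.symm i)) := by
  obtain ⟨hsum, hcross⟩ := hx
  constructor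
  · rw [← mulVec_sum, Equiv.sum_comp, hsum, mulVec_zero]
  · calc ∑ i, xpln i ⨯₃ (A *ᵥ x (σ.symm i)) = ∑ j, xpln (σ j) ⨯₃ (A *ᵥ x j) := by
          rw [← Equiv.sum_comp σ]; simp only [Equiv.symm_apply_apply]
      _ = A *ᵥ ∑ j, xpln j ⨯₃ x j := by
          simp only [hσ, ← mulVec_cross_of_mem_specialOrthogonalGroup hA, mulVec_sum]
      _ = 0 := by rw [hcross, mulVec_zero]

theorem eckartCondition_of_reversal
    (x : ZMod 8 → Fin 3 → ℝ) (hx : EckartCondition x) :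
    EckartCondition (fun i => S.mulVec (x (3 - i))) :=
  hx.comp_symmetry S_mem_specialOrthogonalGroup (Equiv.subLeft 3) xpln_three_sub
end
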